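/- arXiv:2309.13293 — 2 statements merged into one kernel-verified Lean document; each statement's English description precedes it below -/
import Mathlib

section
/- For any real traceless diagonal 3×3 matrix Ω = diag(a, b, −a−b) with Ω ≠ 0, the biaxiality parameter β²(Ω) = 1 − 6 Tr²(Ω³)/Tr³(Ω²) satisfies 0 ≤ β²(Ω) ≤ 1. -/
theorem biaxiality_parameter_bounds (a b : ℝ)
    (h : Matrix.diagonal ![a, b, -a-b] ≠ (0 : Matrix (Fin 3) (Fin 3) ℝ)) :
    let Ω : Matrix (Fin 3) (Fin 3) ℝ := Matrix.diagonal ![a, b, -a-b]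
    0 ≤ 1 - 6 * (Matrix.trace (Ω^3))^2 / (Matrix.trace (Ω^2))^3 ∧
    1 - 6 * (Matrix.trace (Ω^3))^2 / (Matrix.trace (Ω^2))^3 ≤ 1 := by
  intro Ω
  have h2 : Matrix.trace (Ω^2) = 2*(a^2+a*b+b^2) := by
    simp [Ω, Matrix.diagonal_pow, Matrix.trace_diagonal, Fin.sum_univ_three]
    ring
  have h3 : Matrix.trace (Ω^3) = -3*(a*b*(a+b)) := by
    simp [Ω, Matrix.diagonal_pow, Matrix.trace_diagonal, Fin.sum_univ_three]
    ring
  have hab : a ≠ 0 ∨ b ≠ 0 := by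
    by_contra hc
    push_neg at hc
    apply h
    obtain ⟨ha, hb⟩ := hc
    subst ha; subst hb
    ext i j
    fin_cases i <;> fin_cases j <;> simp [Matrix.diagonal]
  have hpos : 0 < a^2+a*b+b^2 := by
    rcases hab with ha | hb
    · nlinarith [sq_nonneg (a + 2*b), sq_nonneg a, sq_pos_of_ne_zero ha]
    · nlinarith [sq_nonneg (2*a + b), sq_nonneg b, sq_pos_of_ne_zero hb]
  rw [h2, h3]
  have hD : 0 < (2*(a^2+a*b+b^2))^3 := by positivity
  constructor
  · rw [sub_nonneg, div_le_one hD]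
    nlinarith [sq_nonneg (a-b), sq_nonneg (a+2*b), sq_nonneg (2*a+b), sq_nonneg (a*b), sq_nonneg ((a-b)*(a+2*b)*(2*a+b)), sq_nonneg (a+b), hpos, sq_nonneg (a*b*(a+b))]
  · have : 0 ≤ 6 * (-3*(a*b*(a+b)))^2 / (2*(a^2+a*b+b^2))^3 := by positivity
    linarith
end

section
/- Fix λ > 2/3. Then the isotropic solution loses stability at t = 1/λ in the following sense: the function h(m) = 6mλt − log((1+3m)/(1−3m)) defined for |m| < 1/3 satisfies h(0) = 0, h'(0) = 6λt − 6, and h'(0) > 0 if and only if t > 1/λ; consequently for t > 1/λ there exists m ≠ 0 with |m| < 1/3 and h(m) = 0. -/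
theorem isotropic_loses_stability (lam : ℝ) (hlam : 2/3 < lam) (t : ℝ) :
    let h : ℝ → ℝ := fun m => 6*m*lam*t - Real.log ((1 + 3*m) / (1 - 3*m))
    h 0 = 0 ∧
    deriv h 0 = 6*lam*t - 6 ∧
    (deriv h 0 > 0 ↔ t > 1/lam) ∧
    (t > 1/lam → ∃ m : ℝ, m ≠ 0 ∧ |m| < 1/3 ∧ h m = 0) := by
  intro h
  have hlam0 : (0:ℝ) < lam := lt_trans (by norm_num) hlam
  have h0 : h 0 = 0 := by simp [h]
  -- derivative
  have hg : HasDerivAt (fun m : ℝ => (1 + 3*m) / (1 - 3*m)) 6 0 := by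
    have h1 : HasDerivAt (fun m : ℝ => 1 + 3*m) 3 0 := by
      simpa using ((hasDerivAt_id (0:ℝ)).const_mul 3).const_add 1
    have h2 : HasDerivAt (fun m : ℝ => 1 - 3*m) (-3) 0 := by
      simpa using ((hasDerivAt_id (0:ℝ)).const_mul 3).const_sub 1
    have := h1.div h2 (by norm_num)
    refine this.congr_deriv ?_
    norm_num
  have hlog : HasDerivAt (fun m : ℝ => Real.log ((1 + 3*m) / (1 - 3*m))) 6 0 := by
    have := hg.log (by norm_num)
    simpa using this
  have hlin : HasDerivAt (fun m : ℝ => 6*m*lam*t) (6*lam*t) 0 := by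
    have : HasDerivAt (fun m : ℝ => 6*m) 6 0 := by
      simpa using (hasDerivAt_id (0:ℝ)).const_mul 6
    have := (this.mul_const lam).mul_const t
    simpa [mul_assoc] using this
  have hd : HasDerivAt h (6*lam*t - 6) 0 := hlin.sub hlog
  have hderiv : deriv h 0 = 6*lam*t - 6 := hd.deriv
  have hiff : deriv h 0 > 0 ↔ t > 1/lam := by
    rw [hderiv]
    constructor
    · intro hpos
      rw [gt_iff_lt, div_lt_iff₀ hlam0]
      nlinarith
    · intro ht
      rw [gt_iff_lt, div_lt_iff₀ hlam0] at ht
      nlinarith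
  refine ⟨h0, hderiv, hiff, ?_⟩
  intro ht
  have hlt : 1 < t * lam := (div_lt_iff₀ hlam0).mp ht
  have hlt' : 1 < lam * t := by linarith [mul_comm t lam ▸ hlt]
  -- endpoint m₁ with h m₁ < 0
  set X : ℝ := 2*lam*t + 1 with hX
  have hX0 : 0 < X := by nlinarith
  set e : ℝ := Real.exp X with he
  have he1 : 1 < e := by rw [he]; have := Real.add_one_le_exp X; nlinarith
  set m₁ : ℝ := (e - 1) / (3 * (e + 1)) with hm₁
  have hden : (0:ℝ) < 3 * (e + 1) := by nlinarith
  have hm₁pos : 0 < m₁ := div_pos (by linarith) hden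
  have hm₁lt : m₁ < 1/3 := by
    rw [hm₁, div_lt_iff₀ hden]; nlinarith
  have harg : (1 + 3*m₁) / (1 - 3*m₁) = e := by
    have h3 : 3 * m₁ = (e - 1) / (e + 1) := by
      rw [hm₁]; field_simp
    have hep : (0:ℝ) < e + 1 := by linarith
    rw [h3]
    field_simp
    ring
  have hhm₁ : h m₁ < 0 := by
    have : h m₁ = 6*m₁*lam*t - X := by
      simp only [h, harg, he, Real.log_exp]
    rw [this]
    have h6 : 6*m₁*lam*t < 2*(lam*t) := by nlinarith
    rw [hX]; nlinarith
  -- small positive point with h > 0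
  have hpos : deriv h 0 > 0 := hiff.mpr ht
  have hslope : Filter.Tendsto (slope h 0) (nhdsWithin 0 {(0:ℝ)}ᶜ) (nhds (6*lam*t - 6)) :=
    hasDerivAt_iff_tendsto_slope.mp hd
  have hev : ∀ᶠ m in nhdsWithin 0 {(0:ℝ)}ᶜ, 0 < slope h 0 m := by
    apply hslope.eventually (p := fun x => 0 < x)
    exact Filter.Tendsto.eventually_const_lt (by rw [hderiv] at hpos; exact hpos) Filter.tendsto_id
  have hle : nhdsWithin (0:ℝ) (Set.Ioi 0) ≤ nhdsWithin 0 {(0:ℝ)}ᶜ :=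
    nhdsWithin_mono _ (fun x hx => ne_of_gt hx)
  have hev2 : ∀ᶠ m in nhdsWithin (0:ℝ) (Set.Ioi 0), 0 < slope h 0 m := hev.filter_mono hle
  have hmem : Set.Ioo (0:ℝ) m₁ ∈ nhdsWithin (0:ℝ) (Set.Ioi 0) :=
    Ioo_mem_nhdsGT_of_mem (Set.left_mem_Ico.mpr hm₁pos)
  obtain ⟨m₀, hs, hm₀⟩ := (hev2.and (Filter.eventually_of_mem hmem (fun x hx => hx))).exists
  have hm₀pos : 0 < m₀ := hm₀.1
  have hm₀lt : m₀ < m₁ := hm₀.2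
  have hhm₀ : 0 < h m₀ := by
    have : slope h 0 m₀ = h m₀ / m₀ := by
      simp [slope, h0, div_eq_inv_mul]
    rw [this] at hs
    exact (div_pos_iff.mp hs).resolve_right (fun ⟨_, hneg⟩ => absurd hm₀pos (not_lt.mpr hneg.le)) |>.1
  -- continuity on [m₀, m₁]
  have hcont : ContinuousOn h (Set.Icc m₀ m₁) := by
    intro x hx
    have hx1 : 0 < 1 - 3*x := by
      have := hx.2; nlinarith [hm₁lt]
    have hx2 : 0 < 1 + 3*x := by
      have := hx.1; nlinarith
    apply ContinuousAt.continuousWithinAt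
    apply ContinuousAt.sub
    · fun_prop
    · apply Real.continuousAt_log ?_ |>.comp
      · exact (continuousAt_const.add (continuousAt_const.mul continuousAt_id)).div
          (continuousAt_const.sub (continuousAt_const.mul continuousAt_id)) (ne_of_gt hx1)
      · positivity
  have himg := intermediate_value_Icc' (le_of_lt hm₀lt) hcont
  have h0mem : (0:ℝ) ∈ Set.Icc (h m₁) (h m₀) := ⟨le_of_lt hhm₁, le_of_lt hhm₀⟩
  obtain ⟨c, hc, hhc⟩ := himg h0mem
  refine ⟨c, ne_of_gt (lt_of_lt_of_le hm₀pos hc.1), ?_, hhc⟩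
  rw [abs_lt]
  constructor
  · linarith [hc.1]
  · linarith [hc.2]
end
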